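/- Let L be a latin square of order n and let P ⊆ L be a partial latin square. Then P has unique completion to L if and only if P ∩ T ≠ ∅ for every trade T ∈ T_L. -/

import Mathlib

/-- A triple (row, column, entry) with all coordinates in `{0, …, n-1}`. -/
abbrev Triple (n : ℕ) := Fin n × Fin n × Fin n

/-- A partial latin square of order `n`: no two distinct triples agree in two coordinates. -/
def IsPLS {n : ℕ} (P : Finset (Triple n)) : Prop :=
  ∀ a ∈ P, ∀ b ∈ P,
    ((a.1 = b.1 ∧ a.2.1 = b.2.1) ∨ (a.1 = b.1 ∧ a.2.2 = b.2.2) ∨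
      (a.2.1 = b.2.1 ∧ a.2.2 = b.2.2)) → a = b

/-- A latin square of order `n`: a partial latin square with every cell filled. -/
def IsLS {n : ℕ} (L : Finset (Triple n)) : Prop :=
  IsPLS L ∧ ∀ r c : Fin n, ∃ e : Fin n, (r, c, e) ∈ L

/-- Condition (R2): for every triple of `T₁` and every pair of coordinates,
there is a unique triple of `T₂` agreeing with it in those two coordinates.
(Condition (R3) is `R2cond T₂ T₁`.) -/
def R2cond {n : ℕ} (T₁ T₂ : Finset (Triple n)) : Prop :=
  ∀ a ∈ T₁,
    (∃! b, b ∈ T₂ ∧ b.1 = a.1 ∧ b.2.1 = a.2.1) ∧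
    (∃! b, b ∈ T₂ ∧ b.1 = a.1 ∧ b.2.2 = a.2.2) ∧
    (∃! b, b ∈ T₂ ∧ b.2.1 = a.2.1 ∧ b.2.2 = a.2.2)

/-- A latin bitrade `(T₁, T₂)`: a pair of partial latin squares satisfying
(R1) disjointness, (R2) and (R3). -/
def IsBitrade {n : ℕ} (T₁ T₂ : Finset (Triple n)) : Prop :=
  IsPLS T₁ ∧ IsPLS T₂ ∧ T₁ ∩ T₂ = ∅ ∧ R2cond T₁ T₂ ∧ R2cond T₂ T₁

/-- The trade space of `L`: nonempty subsets `T ⊆ L` forming a bitrade with some disjoint mate. -/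
def TradeSpace {n : ℕ} (L : Finset (Triple n)) : Set (Finset (Triple n)) :=
  { T | T.Nonempty ∧ T ⊆ L ∧ ∃ T₂, IsBitrade T T₂ }

/-- `P` has unique completion to `L`: `L` is the only latin square of order `n` containing `P`. -/
def UniquelyCompletes {n : ℕ} (P L : Finset (Triple n)) : Prop :=
  ∀ L', IsLS L' → P ⊆ L' → L' = L

/-- A critical set of `L`: a subset with unique completion to `L`, minimal with this property. -/
def IsCriticalSet {n : ℕ} (C L : Finset (Triple n)) : Prop :=
  C ⊆ L ∧ UniquelyCompletes C L ∧ ∀ C' ⊂ C, ¬ UniquelyCompletes C' L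

/-- A face of the simplicial complex `Δ(L)`: a finite nonempty collection of trades of `L`
sharing a common triple. -/
def IsFace {n : ℕ} (L : Finset (Triple n)) (F : Finset (Finset (Triple n))) : Prop :=
  F.Nonempty ∧ (∀ T ∈ F, T ∈ TradeSpace L) ∧ ∃ x : Triple n, ∀ T ∈ F, x ∈ T

/-- A facet of `Δ(L)`: a face maximal under inclusion. -/
def IsFacet {n : ℕ} (L : Finset (Triple n)) (F : Finset (Finset (Triple n))) : Prop :=
  IsFace L F ∧ ∀ F', IsFace L F' → F ⊆ F' → F' = F

/-- A vertex cover of `Δ(L)`: a set `A` of trades of `L` such that every facet is adjacent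
to some `a ∈ A` (i.e. some member of the facet meets `a`). -/
def IsVertexCover {n : ℕ} (L : Finset (Triple n)) (A : Finset (Finset (Triple n))) : Prop :=
  (∀ a ∈ A, a ∈ TradeSpace L) ∧
  ∀ F, IsFacet L F → ∃ a ∈ A, ∃ T ∈ F, (T ∩ a).Nonempty

/-- A minimal vertex cover of `Δ(L)`. -/
def IsMinimalVertexCover {n : ℕ} (L : Finset (Triple n))
    (A : Finset (Finset (Triple n))) : Prop :=
  IsVertexCover L A ∧ ∀ A' ⊂ A, ¬ IsVertexCover L A'

/-!
If `P` misses a trade `T ⊆ L` with mate `T₂`, then `(L \ T) ∪ T₂` is a second latin square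
containing `P`. Conversely, a second latin square `L' ⊇ P` yields the trade `L \ L'` of `L`
(with mate `L' \ L`), which `P ⊆ L'` misses. All three bitrade conditions are handled at once
by viewing a triple `(r, c, e)` through its three pairs `(r, c)`, `(r, e)`, `(c, e)`: a latin
square is exactly a set of triples on which each of these projections is a bijection onto
`Fin n × Fin n`.
-/

variable {n : ℕ}

def pairProj (i : Fin 3) : Triple n → Fin n × Fin n :=
  ![fun t => (t.1, t.2.1), fun t => (t.1, t.2.2), fun t => (t.2.1, t.2.2)] i

theorem exists_pairProj_eq_iff {a b : Triple n} :
    (∃ i, pairProj i a = pairProj i b) ↔ (a.1 = b.1 ∧ a.2.1 = b.2.1) ∨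
      (a.1 = b.1 ∧ a.2.2 = b.2.2) ∨ (a.2.1 = b.2.1 ∧ a.2.2 = b.2.2) := by
  simp [Fin.exists_fin_succ, pairProj, Prod.ext_iff]

theorem isPLS_iff {P : Finset (Triple n)} :
    IsPLS P ↔ ∀ i, Set.InjOn (pairProj i) (P : Set (Triple n)) := by
  simp only [IsPLS, ← exists_pairProj_eq_iff, Set.InjOn, Finset.mem_coe]
  grind

theorem r2cond_iff {T₁ T₂ : Finset (Triple n)} :
    R2cond T₁ T₂ ↔ ∀ a ∈ T₁, ∀ i, ∃! b, b ∈ T₂ ∧ pairProj i b = pairProj i a := by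
  simp [R2cond, Fin.forall_fin_succ, pairProj, Prod.ext_iff]

theorem isLS_iff {L : Finset (Triple n)} :
    IsLS L ↔ IsPLS L ∧ ∀ p, ∃ a ∈ L, pairProj 0 a = p := by
  simp [IsLS, pairProj, Prod.ext_iff]

theorem IsPLS.mono {P Q : Finset (Triple n)} (hQ : IsPLS Q) (h : P ⊆ Q) : IsPLS P :=
  fun a ha b hb => hQ a (h ha) b (h hb)

namespace IsLS

variable {L L' : Finset (Triple n)}

theorem exists_mem_pairProj_eq (hL : IsLS L) (i : Fin 3) (p : Fin n × Fin n) :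
    ∃ a ∈ L, pairProj i a = p := by
  have hinj := isPLS_iff.1 hL.1
  have hcells : L.image (pairProj 0) = Finset.univ :=
    Finset.eq_univ_of_forall fun p => Finset.mem_image.2 ((isLS_iff.1 hL).2 p)
  -- `L` has `n²` triples and each `pairProj i` is injective on it, so it hits all `n²` pairs.
  have himage : L.image (pairProj i) = Finset.univ := by
    apply Finset.eq_univ_of_card
    rw [Finset.card_image_of_injOn (hinj i), ← Finset.card_image_of_injOn (hinj 0), hcells,
      Finset.card_univ]
  exact Finset.mem_image.1 (himage ▸ Finset.mem_univ p)

theorem eq_of_subset (hL : IsLS L) (hL' : IsLS L') (h : L ⊆ L') : L = L' := by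
  refine h.antisymm fun x hx => ?_
  obtain ⟨a, ha, hax⟩ := hL.exists_mem_pairProj_eq 0 (pairProj 0 x)
  rwa [isPLS_iff.1 hL'.1 0 (h ha) hx hax] at ha

theorem existsUnique_mem_sdiff (hL : IsLS L) (hL' : IsLS L') {a : Triple n} (ha : a ∈ L \ L')
    (i : Fin 3) : ∃! b, b ∈ L' \ L ∧ pairProj i b = pairProj i a := by
  rw [Finset.mem_sdiff] at ha
  obtain ⟨b, hb, hba⟩ := hL'.exists_mem_pairProj_eq i (pairProj i a)
  refine ⟨b, ⟨Finset.mem_sdiff.2 ⟨hb, fun hbL => ha.2 ?_⟩, hba⟩, fun c ⟨hc, hca⟩ => ?_⟩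
  · rwa [← isPLS_iff.1 hL.1 i hbL ha.1 hba]
  · exact isPLS_iff.1 hL'.1 i (Finset.mem_sdiff.1 hc).1 hb (hca.trans hba.symm)

theorem isBitrade_sdiff (hL : IsLS L) (hL' : IsLS L') : IsBitrade (L \ L') (L' \ L) :=
  ⟨hL.1.mono Finset.sdiff_subset, hL'.1.mono Finset.sdiff_subset,
    Finset.disjoint_iff_inter_eq_empty.1 disjoint_sdiff_sdiff,
    r2cond_iff.2 fun _ ha => hL.existsUnique_mem_sdiff hL' ha,
    r2cond_iff.2 fun _ ha => hL'.existsUnique_mem_sdiff hL ha⟩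

theorem sdiff_mem_tradeSpace (hL : IsLS L) (hL' : IsLS L') (hne : L ≠ L') :
    L \ L' ∈ TradeSpace L :=
  ⟨Finset.sdiff_nonempty.2 fun h => hne (hL.eq_of_subset hL' h), Finset.sdiff_subset,
    L' \ L, hL.isBitrade_sdiff hL'⟩

theorem sdiff_union_of_isBitrade {T T₂ : Finset (Triple n)} (hL : IsLS L) (hT : T ⊆ L)
    (hB : IsBitrade T T₂) : IsLS (L \ T ∪ T₂) := by
  obtain ⟨-, hT₂, -, hR2, hR3⟩ := hB
  have hinjL := isPLS_iff.1 hL.1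
  -- by (R3) a clash with `b ∈ T₂` is also a clash with some triple of `T`, hence lies in `T`
  have no_clash : ∀ i, ∀ a ∈ L \ T, ∀ b ∈ T₂, pairProj i a ≠ pairProj i b := by
    intro i a ha b hb hab
    obtain ⟨c, ⟨hc, hcb⟩, -⟩ := r2cond_iff.1 hR3 b hb i
    rw [Finset.mem_sdiff] at ha
    exact ha.2 (hinjL i ha.1 (hT hc) (hab.trans hcb.symm) ▸ hc)
  have hdisj : Disjoint (L \ T) T₂ :=
    Finset.disjoint_left.2 fun a ha hb => no_clash 0 a ha a hb rfl
  refine isLS_iff.2 ⟨isPLS_iff.2 fun i => ?_, fun p => ?_⟩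
  · rw [Finset.coe_union, Set.injOn_union (Finset.disjoint_coe.2 hdisj)]
    exact ⟨(hinjL i).mono (Finset.coe_subset.2 Finset.sdiff_subset), isPLS_iff.1 hT₂ i,
      no_clash i⟩
  · obtain ⟨a, ha, rfl⟩ := hL.exists_mem_pairProj_eq 0 p
    by_cases haT : a ∈ T
    · obtain ⟨b, ⟨hb, hba⟩, -⟩ := r2cond_iff.1 hR2 a haT 0
      exact ⟨b, Finset.mem_union_right _ hb, hba⟩
    · exact ⟨a, Finset.mem_union_left _ (Finset.mem_sdiff.2 ⟨ha, haT⟩), rfl⟩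

end IsLS

theorem UniquelyCompletes.inter_nonempty {P L T : Finset (Triple n)} (hL : IsLS L) (hP : P ⊆ L)
    (hU : UniquelyCompletes P L) (hT : T ∈ TradeSpace L) : (P ∩ T).Nonempty := by
  obtain ⟨⟨t, ht⟩, hTL, T₂, hB⟩ := hT
  by_contra hPT
  have hPL' : P ⊆ L \ T ∪ T₂ := fun x hx => Finset.mem_union_left _
    (Finset.mem_sdiff.2 ⟨hP hx, fun hxT => hPT ⟨x, Finset.mem_inter.2 ⟨hx, hxT⟩⟩⟩)
  have hL' : L \ T ∪ T₂ = L := hU _ (hL.sdiff_union_of_isBitrade hTL hB) hPL'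
  have htL' : t ∈ L \ T ∪ T₂ := hL'.symm ▸ hTL ht
  rcases Finset.mem_union.1 htL' with htL | htT₂
  · exact (Finset.mem_sdiff.1 htL).2 ht
  · exact Finset.eq_empty_iff_forall_notMem.1 hB.2.2.1 t (Finset.mem_inter.2 ⟨ht, htT₂⟩)

theorem uniquelyCompletes_of_forall_inter_nonempty {P L : Finset (Triple n)} (hL : IsLS L)
    (h : ∀ T ∈ TradeSpace L, (P ∩ T).Nonempty) : UniquelyCompletes P L := by
  intro L' hL' hPL'
  by_contra hne
  obtain ⟨x, hx⟩ := h _ (hL.sdiff_mem_tradeSpace hL' (Ne.symm hne))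
  rw [Finset.mem_inter, Finset.mem_sdiff] at hx
  exact hx.2.2 (hPL' hx.1)

/-- A partial latin square `P ⊆ L` has unique completion to `L` iff it meets every trade
in the trade space of `L`. -/
theorem uniquely_completes_iff_meets_every_trade {n : ℕ} (L P : Finset (Triple n))
    (hL : IsLS L) (hP : P ⊆ L) :
    UniquelyCompletes P L ↔ ∀ T ∈ TradeSpace L, (P ∩ T).Nonempty :=
  ⟨fun hU _ hT => hU.inter_nonempty hL hP hT, uniquelyCompletes_of_forall_inter_nonempty hL⟩
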